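/- arXiv:math/9806122 — 2 statements merged into one kernel-verified Lean document; each statement's English description precedes it below -/
import Mathlib

section
/- Let Γ be a group acting by homeomorphisms on a locally connected topological space X and let p ∈ X. Then there exists an open neighborhood of p that can be concentrated with control at p if and only if there exists a connected open neighborhood of p that can be concentrated with control at p. (The connected component of p in a neighborhood that concentrates with control itself concentrates with control, using elements γ with γ⁻¹(p) ∈ U ∩ V.) -/
open Pointwise

/-- `U` can be concentrated with control at `p`: for every open neighborhood `V` of `p`
there exists `γ ∈ Γ` with `p ∈ γ(U)`, `γ(U) ⊆ V`, and moreover `p ∈ γ(V)`. -/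
def CanConcentrateWithControl {Γ X : Type*} [Group Γ] [MulAction Γ X] [TopologicalSpace X]
    (U : Set X) (p : X) : Prop :=
  ∀ V : Set X, IsOpen V → p ∈ V → ∃ γ : Γ, p ∈ γ • U ∧ γ • U ⊆ V ∧ p ∈ γ • V

/- Concentrate `U` into the component `W` of `p` in `V ∩ U`. Control gives `γ⁻¹ • p ∈ W`, and
`W` is a connected subset of `U` through `p`, so `γ⁻¹ • p` lies in the component of `p` in `U`. -/
theorem CanConcentrateWithControl.connectedComponentIn {Γ X : Type*} [Group Γ] [MulAction Γ X]
    [TopologicalSpace X] [LocallyConnectedSpace X] {U : Set X} {p : X} (hUo : IsOpen U)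
    (hpU : p ∈ U) (hU : CanConcentrateWithControl (Γ := Γ) U p) :
    CanConcentrateWithControl (Γ := Γ) (connectedComponentIn U p) p := by
  intro V hVo hpV
  set C := _root_.connectedComponentIn U p
  set W := _root_.connectedComponentIn (V ∩ U) p
  have hpW : p ∈ W := mem_connectedComponentIn ⟨hpV, hpU⟩
  have hWV : W ⊆ V := (connectedComponentIn_subset _ _).trans Set.inter_subset_left
  have hWC : W ⊆ C := isPreconnected_connectedComponentIn.subset_connectedComponentIn hpW
    ((connectedComponentIn_subset _ _).trans Set.inter_subset_right)
  obtain ⟨γ, -, hγU, hpγW⟩ := hU W (hVo.inter hUo).connectedComponentIn hpW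
  refine ⟨γ, Set.smul_set_mono hWC hpγW, ?_, Set.smul_set_mono hWV hpγW⟩
  calc γ • C ⊆ γ • U := Set.smul_set_mono (connectedComponentIn_subset _ _)
    _ ⊆ W := hγU
    _ ⊆ V := hWV

theorem exists_ctrl_concentration_iff_exists_connected_general
    {Γ X : Type*} [Group Γ] [MulAction Γ X] [TopologicalSpace X] [LocallyConnectedSpace X]
    (p : X) :
    (∃ U : Set X, IsOpen U ∧ p ∈ U ∧ CanConcentrateWithControl (Γ := Γ) U p) ↔
      (∃ U : Set X, IsOpen U ∧ IsConnected U ∧ p ∈ U ∧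
        CanConcentrateWithControl (Γ := Γ) U p) := by
  constructor
  · rintro ⟨U, hUo, hpU, hU⟩
    exact ⟨connectedComponentIn U p, hUo.connectedComponentIn,
      isConnected_connectedComponentIn_iff.2 hpU, mem_connectedComponentIn hpU,
      hU.connectedComponentIn hUo hpU⟩
  · rintro ⟨U, hUo, -, hpU, hU⟩
    exact ⟨U, hUo, hpU, hU⟩

/-- For a group acting by homeomorphisms on a locally connected space, there exists an open
neighborhood of `p` that can be concentrated with control at `p` if and only if there exists
a connected open neighborhood of `p` that can be concentrated with control at `p`. -/
theorem exists_ctrl_concentration_iff_exists_connected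
    {Γ X : Type*} [Group Γ] [MulAction Γ X] [TopologicalSpace X] [LocallyConnectedSpace X]
    (hhomeo : ∀ γ : Γ, Continuous (fun x : X => γ • x))
    (p : X) :
    (∃ U : Set X, IsOpen U ∧ p ∈ U ∧ CanConcentrateWithControl (Γ := Γ) U p) ↔
      (∃ U : Set X, IsOpen U ∧ IsConnected U ∧ p ∈ U ∧
        CanConcentrateWithControl (Γ := Γ) U p) :=
  exists_ctrl_concentration_iff_exists_connected_general p
end

section
/- Let Γ be a Fuchsian group, acting on S¹ by the boundary extensions of its elements, and let p ∈ S¹. Then p is a geodesic separation point of Γ if and only if: there is a neighborhood W of p in S¹ such that whenever q, r ∈ W ∖ {p} are distinct points for which the open arc of S¹ with endpoints q and r that contains p is contained in W, then for every neighborhood V of p there exists γ ∈ Γ such that the open arc with endpoints γ(q) and γ(r) that contains p is contained in V. (Equivalently: whenever the endpoints of a geodesic λ of B² separate p from the boundary of a small neighborhood of p, for each neighborhood V of p some translate γ(λ) has endpoints separating p from the boundary of V.) -/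
noncomputable section

open Complex Metric Filter Set Topology

/-- Elements of SU(1,1): pairs (a,b) of complex numbers with a·ā − b·b̄ = 1.
These parametrize the Möbius transformations z ↦ (az+b)/(b̄z+ā) of the unit disk. -/
@[ext]
structure SU11 : Type where
  a : ℂ
  b : ℂ
  rel : a * (starRingEnd ℂ) a - b * (starRingEnd ℂ) b = 1

namespace SU11

instance : Mul SU11 :=
  ⟨fun x y =>
    ⟨x.a * y.a + x.b * (starRingEnd ℂ) y.b, x.a * y.b + x.b * (starRingEnd ℂ) y.a, by
      have hx := x.rel
      have hy := y.rel
      simp only [map_add, map_mul, Complex.conj_conj]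
      linear_combination (y.a * (starRingEnd ℂ) y.a - y.b * (starRingEnd ℂ) y.b) * hx + hy⟩⟩

instance : One SU11 := ⟨⟨1, 0, by simp⟩⟩

instance : Inv SU11 :=
  ⟨fun x => ⟨(starRingEnd ℂ) x.a, -x.b, by
    have hx := x.rel
    simp only [Complex.conj_conj, map_neg]
    linear_combination hx⟩⟩

@[simp] lemma mul_a (x y : SU11) : (x * y).a = x.a * y.a + x.b * (starRingEnd ℂ) y.b := rfl
@[simp] lemma mul_b (x y : SU11) : (x * y).b = x.a * y.b + x.b * (starRingEnd ℂ) y.a := rfl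
@[simp] lemma one_a : (1 : SU11).a = 1 := rfl
@[simp] lemma one_b : (1 : SU11).b = 0 := rfl
@[simp] lemma inv_a (x : SU11) : (x⁻¹).a = (starRingEnd ℂ) x.a := rfl
@[simp] lemma inv_b (x : SU11) : (x⁻¹).b = -x.b := rfl

instance : Group SU11 where
  mul_assoc x y z := by
    ext <;> simp only [mul_a, mul_b, map_add, map_mul, Complex.conj_conj] <;> ring
  one_mul x := by ext <;> simp
  mul_one x := by ext <;> simp
  inv_mul_cancel x := by
    have hx := x.rel
    ext
    · simp only [mul_a, inv_a, inv_b, one_a, Complex.conj_conj, map_neg]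
      linear_combination hx
    · simp only [mul_b, inv_a, inv_b, one_b, Complex.conj_conj, map_neg]
      ring

/-- The Möbius transformation of the unit disk associated to an element of SU(1,1). -/
def toFun (g : SU11) (z : ℂ) : ℂ :=
  (g.a * z + g.b) / ((starRingEnd ℂ) g.b * z + (starRingEnd ℂ) g.a)

end SU11

/-- The unit circle. -/
def S1 : Set ℂ := Metric.sphere 0 1

/-- The open unit disk (Poincaré disk). -/
def D2 : Set ℂ := Metric.ball 0 1

/-- A Fuchsian group: a discrete subgroup of the Möbius transformations of the disk.
Discreteness is expressed by local finiteness of the orbit of the origin in the disk. -/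
def IsFuchsian (Γ : Subgroup SU11) : Prop :=
  ∀ r : ℝ, r < 1 → {γ : SU11 | γ ∈ Γ ∧ ‖SU11.toFun γ 0‖ ≤ r}.Finite
/-- An open subset of the circle (in its subspace topology). -/
def OpenInS1 (U : Set ℂ) : Prop := U ⊆ S1 ∧ ∃ O : Set ℂ, IsOpen O ∧ U = O ∩ S1

/-- A neighborhood of `p` in the circle. -/
def NbhdInS1 (W : Set ℂ) (p : ℂ) : Prop := W ⊆ S1 ∧ W ∈ nhdsWithin p S1

/-- `U` can be concentrated at `p`: for every (open) neighborhood `V` of `p` in `S¹`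
there is `γ ∈ Γ` with `p ∈ γ(U)` and `γ(U) ⊆ V`. -/
def CanConcentrate (Γ : Subgroup SU11) (U : Set ℂ) (p : ℂ) : Prop :=
  ∀ V : Set ℂ, OpenInS1 V → p ∈ V →
    ∃ γ ∈ Γ, p ∈ SU11.toFun γ '' U ∧ SU11.toFun γ '' U ⊆ V

/-- `U` can be concentrated with control at `p`: moreover `γ` can be chosen with `p ∈ γ(V)`. -/
def CanConcentrateCtrl (Γ : Subgroup SU11) (U : Set ℂ) (p : ℂ) : Prop :=
  ∀ V : Set ℂ, OpenInS1 V → p ∈ V →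
    ∃ γ ∈ Γ, p ∈ SU11.toFun γ '' U ∧ SU11.toFun γ '' U ⊆ V ∧ p ∈ SU11.toFun γ '' V

/-- `p` is a controlled concentration point for `Γ`. -/
def ControlledConcPt (Γ : Subgroup SU11) (p : ℂ) : Prop :=
  ∃ U : Set ℂ, OpenInS1 U ∧ p ∈ U ∧ CanConcentrateCtrl Γ U p

/-- `p` is a concentration point for `Γ`: every sufficiently small connected open
neighborhood of `p` can be concentrated at `p`. -/
def ConcPt (Γ : Subgroup SU11) (p : ℂ) : Prop :=
  ∃ W : Set ℂ, NbhdInS1 W p ∧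
    ∀ U : Set ℂ, OpenInS1 U → IsPreconnected U → p ∈ U → U ⊆ W → CanConcentrate Γ U p

/-- `p` is a geodesic separation point for `Γ`: for every sufficiently small connected
open neighborhood `U` of `p`, either `U` or `S¹ ∖ closure U` can be concentrated at `p`. -/
def GeodSepPt (Γ : Subgroup SU11) (p : ℂ) : Prop :=
  ∃ W : Set ℂ, NbhdInS1 W p ∧
    ∀ U : Set ℂ, OpenInS1 U → IsPreconnected U → p ∈ U → U ⊆ W →
      (CanConcentrate Γ U p ∨ CanConcentrate Γ (S1 \ closure U) p)

/-- `p` is a weak concentration point for `Γ`: some nonempty connected open subset of the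
circle can be concentrated at `p`. -/
def WeakConcPt (Γ : Subgroup SU11) (p : ℂ) : Prop :=
  ∃ U : Set ℂ, OpenInS1 U ∧ U.Nonempty ∧ IsPreconnected U ∧ CanConcentrate Γ U p

/-- The orbit of the origin under `Γ`. -/
def orbitZero (Γ : Subgroup SU11) : Set ℂ := {z : ℂ | ∃ γ ∈ Γ, SU11.toFun γ 0 = z}

/-- `p` is a limit point of `Γ`: an accumulation point on `S¹` of the orbit of `0`. -/
def LimitPoint (Γ : Subgroup SU11) (p : ℂ) : Prop :=
  p ∈ S1 ∧ p ∈ closure (orbitZero Γ)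

/-- Hyperbolic cosine of the Poincaré distance between two points of the disk. -/
def hCosh (z w : ℂ) : ℝ :=
  1 + 2 * Complex.normSq (z - w) / ((1 - Complex.normSq z) * (1 - Complex.normSq w))

/-- The Poincaré (hyperbolic) distance on the unit disk. -/
def hDist (z w : ℂ) : ℝ := Real.log (hCosh z w + Real.sqrt (hCosh z w ^ 2 - 1))

/-- `p ∈ S¹` is a conical limit point of `Γ`: some sequence of distinct elements moves the
origin to `p` while staying within a bounded hyperbolic distance of the geodesic ray
(the Euclidean radius) from `0` to `p`. -/
def ConicalLimitPt (Γ : Subgroup SU11) (p : ℂ) : Prop :=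
  ∃ C : ℝ, 0 < C ∧ ∃ γs : ℕ → SU11, (∀ n, γs n ∈ Γ) ∧ Function.Injective γs ∧
    Filter.Tendsto (fun n => SU11.toFun (γs n) 0) Filter.atTop (nhds p) ∧
    ∀ n, ∃ t : ℝ, 0 ≤ t ∧ t < 1 ∧ hDist (SU11.toFun (γs n) 0) ((t : ℂ) * p) ≤ C

/-- A parabolic element: a non-identity element with exactly one fixed point in the
closed disk. -/
def IsParabolic (g : SU11) : Prop :=
  g ≠ 1 ∧ ∃! z : ℂ, ‖z‖ ≤ 1 ∧ SU11.toFun g z = z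

/-- `p` is a parabolic fixed point of `Γ`. -/
def ParabolicFixedPt (Γ : Subgroup SU11) (p : ℂ) : Prop :=
  ∃ γ ∈ Γ, IsParabolic γ ∧ SU11.toFun γ p = p

/-- A hyperbolic element: a non-identity element fixing two distinct points of `S¹`. -/
def IsHyperbolicEl (g : SU11) : Prop :=
  g ≠ 1 ∧ ∃ z w : ℂ, z ≠ w ∧ z ∈ S1 ∧ w ∈ S1 ∧ SU11.toFun g z = z ∧ SU11.toFun g w = w

/-- A torsionfree subgroup. -/
def IsTorsionFreeSubgroup (Γ : Subgroup SU11) : Prop :=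
  ∀ γ ∈ Γ, γ ≠ 1 → ∀ n : ℕ, 0 < n → γ ^ n ≠ 1

/-- A (unit-speed) geodesic ray in the Poincaré disk, parameterized on `[0,∞)`. -/
def IsGeodesicRay (α : ℝ → ℂ) : Prop :=
  (∀ t : ℝ, 0 ≤ t → α t ∈ D2) ∧ ∀ s t : ℝ, 0 ≤ s → 0 ≤ t → hDist (α s) (α t) = |s - t|

/-- A complete geodesic of the Poincaré disk, as a subset. -/
def IsCompleteGeodesic (L : Set ℂ) : Prop :=
  ∃ c : ℝ → ℂ, (∀ t, c t ∈ D2) ∧ (∀ s t : ℝ, hDist (c s) (c t) = |s - t|) ∧ L = Set.range c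

/-- `p ∈ S¹` is an endpoint of the complete geodesic `L`. -/
def IsEndpointOf (p : ℂ) (L : Set ℂ) : Prop :=
  ∃ c : ℝ → ℂ, (∀ t, c t ∈ D2) ∧ (∀ s t : ℝ, hDist (c s) (c t) = |s - t|) ∧
    L = Set.range c ∧ Filter.Tendsto c Filter.atTop (nhds p)

/-!
The statement is topological: every `γ` acts on `S¹` as a homeomorphism, so it carries the
components of `S¹ ∖ {q, r}` onto those of `S¹ ∖ {γ q, γ r}`. For distinct `q, r ∈ S¹` these
components are the two open arcs between `q` and `r`, and each is `S¹ ∖ closure` of the other;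
conversely, lifting to angles shows that every connected open neighbourhood of `p` inside a short
arc is such an arc, with endpoints close to `p`. Hence concentrating `U` or `S¹ ∖ closure U` at
`p` is the same as moving the arc between `γ q` and `γ r` that contains `p` into a given `V`.
-/

open Real

theorem Set.LeftInvOn.image_connectedComponentIn {X Y : Type*} [TopologicalSpace X]
    [TopologicalSpace Y] {f : X → Y} {g : Y → X} {s : Set X} {x : X}
    (hgf : LeftInvOn g f s) (hf : ContinuousOn f s) (hg : ContinuousOn g (f '' s)) (hx : x ∈ s) :
    f '' connectedComponentIn s x = connectedComponentIn (f '' s) (f x) := by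
  refine (hf.image_connectedComponentIn_subset hx).antisymm ?_
  have h := hg.image_connectedComponentIn_subset (mem_image_of_mem f hx)
  rw [hgf.image_image, hgf hx] at h
  calc connectedComponentIn (f '' s) (f x)
      = f '' (g '' connectedComponentIn (f '' s) (f x)) :=
        (LeftInvOn.image_image' hgf.rightInvOn_image (connectedComponentIn_subset _ _)).symm
    _ ⊆ f '' connectedComponentIn s x := image_mono h

lemma IsOpen.eq_Ioo_csInf_csSup {α : Type*} [ConditionallyCompleteLinearOrder α]
    [TopologicalSpace α] [OrderTopology α] [DenselyOrdered α] [NoMinOrder α] [NoMaxOrder α]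
    {T : Set α} (hT : IsOpen T) (hTc : IsPreconnected T)
    (hne : T.Nonempty) (hb : BddBelow T) (ha : BddAbove T) : T = Ioo (sInf T) (sSup T) := by
  refine Subset.antisymm (fun t ht ↦ ⟨?_, ?_⟩) (IsConnected.Ioo_csInf_csSup_subset ⟨hne, hTc⟩ hb ha)
  · obtain ⟨s, hst, hs⟩ := Eventually.exists_lt (hT.mem_nhds ht)
    exact (csInf_le hb hs).trans_lt hst
  · obtain ⟨s, hts, hs⟩ := Eventually.exists_gt (hT.mem_nhds ht)
    exact hts.trans_le (le_csSup ha hs)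

lemma mem_S1_iff {z : ℂ} : z ∈ S1 ↔ ‖z‖ = 1 := by
  simp [S1]

lemma OpenInS1.nbhdInS1 {U : Set ℂ} {p : ℂ} (hU : OpenInS1 U) (hp : p ∈ U) : NbhdInS1 U p := by
  obtain ⟨hUS, O, hO, rfl⟩ := hU
  exact ⟨hUS, mem_nhdsWithin.mpr ⟨O, hO, hp.1, subset_rfl⟩⟩

lemma OpenInS1.inter {U V : Set ℂ} (hU : OpenInS1 U) (hV : OpenInS1 V) : OpenInS1 (U ∩ V) := by
  obtain ⟨hUS, O, hO, rfl⟩ := hU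
  obtain ⟨-, O', hO', rfl⟩ := hV
  exact ⟨inter_subset_left.trans hUS, O ∩ O', hO.inter hO', (inter_inter_distrib_right _ _ _).symm⟩

lemma NbhdInS1.exists_openInS1_subset {V : Set ℂ} {p : ℂ} (hV : NbhdInS1 V p) (hp : p ∈ S1) :
    ∃ V₀, OpenInS1 V₀ ∧ p ∈ V₀ ∧ V₀ ⊆ V := by
  obtain ⟨O, hO, hpO, hOV⟩ := mem_nhdsWithin.mp hV.2
  exact ⟨O ∩ S1, ⟨inter_subset_right, O, hO, rfl⟩, ⟨hpO, hp⟩, hOV⟩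

namespace SU11

lemma normSq_a_sub_normSq_b (g : SU11) : normSq g.a - normSq g.b = 1 := by
  have h := g.rel
  rw [mul_conj, mul_conj] at h
  exact_mod_cast h

lemma denom_ne_zero (g : SU11) {z : ℂ} (hz : ‖z‖ ≤ 1) :
    (starRingEnd ℂ) g.b * z + (starRingEnd ℂ) g.a ≠ 0 := by
  intro h
  have hba : ‖g.b‖ < ‖g.a‖ := by
    have h1 := g.normSq_a_sub_normSq_b
    rw [normSq_eq_norm_sq, normSq_eq_norm_sq] at h1
    nlinarith [norm_nonneg g.a, norm_nonneg g.b]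
  have h2 : ‖g.a‖ = ‖g.b‖ * ‖z‖ := by
    simpa using congrArg norm (eq_neg_of_add_eq_zero_right h)
  nlinarith [norm_nonneg g.b]

lemma toFun_inv_toFun (g : SU11) {z : ℂ}
    (hz : (starRingEnd ℂ) g.b * z + (starRingEnd ℂ) g.a ≠ 0) : toFun g⁻¹ (toFun g z) = z := by
  set N := g.a * z + g.b
  set D := (starRingEnd ℂ) g.b * z + (starRingEnd ℂ) g.a
  have hnum : (starRingEnd ℂ) g.a * (N / D) + -g.b = z / D := by
    field_simp
    linear_combination z * g.rel
  have hden : -(starRingEnd ℂ) g.b * (N / D) + g.a = 1 / D := by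
    field_simp
    linear_combination g.rel
  simp only [toFun, inv_a, inv_b, map_neg, conj_conj]
  rw [hnum, hden]
  field_simp

lemma denom_eq_conj (g : SU11) {z : ℂ} (hz : z ∈ S1) :
    (starRingEnd ℂ) g.b * z + (starRingEnd ℂ) g.a =
      (starRingEnd ℂ) ((starRingEnd ℂ) z * (g.a * z + g.b)) := by
  have hzz : z * (starRingEnd ℂ) z = 1 := by
    rw [mul_conj, normSq_eq_norm_sq, mem_S1_iff.mp hz]; norm_num
  simp only [map_mul, map_add, conj_conj]
  linear_combination (-(starRingEnd ℂ) g.a) * hzz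

lemma mapsTo_toFun_S1 (g : SU11) : MapsTo (toFun g) S1 S1 := by
  intro z hz
  have hD := g.denom_ne_zero (mem_S1_iff.mp hz).le
  rw [mem_S1_iff, toFun, norm_div, g.denom_eq_conj hz, norm_conj, norm_mul, norm_conj,
    mem_S1_iff.mp hz, one_mul, div_self]
  rw [g.denom_eq_conj hz, map_ne_zero] at hD
  exact norm_ne_zero_iff.mpr (right_ne_zero_of_mul hD)

lemma continuousOn_toFun (g : SU11) : ContinuousOn (toFun g) S1 :=
  ContinuousOn.div (by fun_prop) (by fun_prop) fun _ hz ↦ g.denom_ne_zero (mem_S1_iff.mp hz).le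

lemma leftInvOn_toFun (g : SU11) : LeftInvOn (toFun g⁻¹) (toFun g) S1 :=
  fun _ hz ↦ g.toFun_inv_toFun (g.denom_ne_zero (mem_S1_iff.mp hz).le)

lemma image_toFun_S1 (g : SU11) : toFun g '' S1 = S1 := by
  refine g.mapsTo_toFun_S1.image_subset.antisymm fun z hz ↦
    ⟨toFun g⁻¹ z, g⁻¹.mapsTo_toFun_S1 hz, ?_⟩
  simpa using g⁻¹.leftInvOn_toFun hz

lemma image_S1_diff_pair (g : SU11) {q r : ℂ} (hq : q ∈ S1) (hr : r ∈ S1) :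
    toFun g '' (S1 \ {q, r}) = S1 \ {toFun g q, toFun g r} := by
  rw [g.leftInvOn_toFun.injOn.image_sdiff_subset (pair_subset hq hr), image_toFun_S1, image_pair]

lemma image_connectedComponentIn (g : SU11) {F : Set ℂ} {x : ℂ} (hF : F ⊆ S1) (hx : x ∈ F) :
    toFun g '' connectedComponentIn F x = connectedComponentIn (toFun g '' F) (toFun g x) := by
  refine (g.leftInvOn_toFun.mono hF).image_connectedComponentIn (g.continuousOn_toFun.mono hF)
    (g⁻¹.continuousOn_toFun.mono ?_) hx
  exact (image_mono hF).trans g.image_toFun_S1.subset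

lemma image_connectedComponentIn_S1_diff_pair (γ : SU11) {q r y : ℂ} (hq : q ∈ S1)
    (hr : r ∈ S1) (hy : y ∈ S1 \ {q, r}) :
    toFun γ '' connectedComponentIn (S1 \ {q, r}) y =
      connectedComponentIn (S1 \ {toFun γ q, toFun γ r}) (toFun γ y) := by
  rw [γ.image_connectedComponentIn sdiff_subset hy, γ.image_S1_diff_pair hq hr]

end SU11

lemma circleMap_mem_S1 (t : ℝ) : circleMap 0 1 t ∈ S1 :=
  circleMap_mem_sphere 0 zero_le_one t

lemma circleMap_ne_circleMap {s t : ℝ} (hst : s < t) (hts : t < s + 2 * π) :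
    circleMap 0 1 s ≠ circleMap 0 1 t := fun h ↦
  hst.ne (eq_of_circleMap_eq one_ne_zero (by rw [abs_sub_lt_iff]; constructor <;> linarith) h)

lemma image_circleMap_subset_S1 (s : Set ℝ) : circleMap 0 1 '' s ⊆ S1 := by
  rintro _ ⟨t, -, rfl⟩
  exact circleMap_mem_S1 t

lemma image_circleMap_Ico (c : ℝ) : circleMap 0 1 '' Ico c (c + 2 * π) = S1 := by
  refine (image_circleMap_subset_S1 _).antisymm fun z hz ↦ ?_
  rw [S1, ← abs_one, ← range_circleMap] at hz
  obtain ⟨t, rfl⟩ := hz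
  obtain ⟨s, hs, hst⟩ := (periodic_circleMap 0 1).exists_mem_Ico two_pi_pos t c
  exact ⟨s, hs, hst.symm⟩

lemma injOn_circleMap_Ico (c : ℝ) : InjOn (circleMap 0 1) (Ico c (c + 2 * π)) :=
  injOn_circleMap_of_abs_sub_le' one_ne_zero (by linarith)

lemma isClosed_image_circleMap_Icc (a b : ℝ) : IsClosed (circleMap 0 1 '' Icc a b) :=
  (isCompact_Icc.image (continuous_circleMap 0 1)).isClosed

def circleArc (a b : ℝ) : Set ℂ := circleMap 0 1 '' Ioo a b

section circleArc

variable {a b : ℝ}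

lemma circleArc_subset_S1 : circleArc a b ⊆ S1 :=
  image_circleMap_subset_S1 _

lemma isPreconnected_circleArc : IsPreconnected (circleArc a b) :=
  isPreconnected_Ioo.image _ (continuous_circleMap 0 1).continuousOn

lemma circleArc_add_two_pi : circleArc (a + 2 * π) (b + 2 * π) = circleArc a b := by
  rw [circleArc, ← image_add_const_Ioo, image_image]
  exact image_congr fun t _ ↦ periodic_circleMap 0 1 t

lemma S1_diff_image_Icc (hab : a ≤ b) (hb : b < a + 2 * π) :
    S1 \ circleMap 0 1 '' Icc a b = circleArc b (a + 2 * π) := by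
  rw [← image_circleMap_Ico a, ← (injOn_circleMap_Ico a).image_sdiff_subset
    (Icc_subset_Ico_right hb), circleArc]
  congr 1
  ext t
  simp only [Set.mem_sdiff, mem_Ico, mem_Icc, mem_Ioo]
  grind

lemma circleArc_eq_S1_diff (hab : a < b) (hb : b < a + 2 * π) :
    circleArc a b = S1 \ circleMap 0 1 '' Icc b (a + 2 * π) := by
  rw [S1_diff_image_Icc hb.le (by linarith), circleArc_add_two_pi]

lemma openInS1_circleArc (hab : a < b) (hb : b < a + 2 * π) : OpenInS1 (circleArc a b) := by
  refine ⟨circleArc_subset_S1, (circleMap 0 1 '' Icc b (a + 2 * π))ᶜ,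
    (isClosed_image_circleMap_Icc _ _).isOpen_compl, ?_⟩
  rw [circleArc_eq_S1_diff hab hb, sdiff_eq, inter_comm]

lemma closure_circleArc (hab : a < b) : closure (circleArc a b) = circleMap 0 1 '' Icc a b := by
  refine (closure_minimal (image_mono Ioo_subset_Icc_self)
    (isClosed_image_circleMap_Icc a b)).antisymm ?_
  rw [← closure_Ioo hab.ne]
  exact image_closure_subset_closure_image (continuous_circleMap 0 1)

lemma S1_diff_closure_circleArc (hab : a < b) (hb : b < a + 2 * π) :
    S1 \ closure (circleArc a b) = circleArc b (a + 2 * π) := by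
  rw [closure_circleArc hab, S1_diff_image_Icc hab.le hb]

lemma S1_diff_pair_eq_union (hab : a < b) (hb : b < a + 2 * π) :
    S1 \ {circleMap 0 1 a, circleMap 0 1 b} = circleArc a b ∪ circleArc b (a + 2 * π) := by
  have hends : {circleMap 0 1 a, circleMap 0 1 b} ⊆ circleMap 0 1 '' Icc a b :=
    pair_subset ⟨a, left_mem_Icc.mpr hab.le, rfl⟩ ⟨b, right_mem_Icc.mpr hab.le, rfl⟩
  have hends' : {circleMap 0 1 a, circleMap 0 1 b} ⊆ circleMap 0 1 '' Icc b (a + 2 * π) :=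
    pair_subset ⟨a + 2 * π, right_mem_Icc.mpr (by linarith), periodic_circleMap 0 1 a⟩
      ⟨b, left_mem_Icc.mpr (by linarith), rfl⟩
  ext z
  constructor
  · rintro ⟨hz, hzab⟩
    by_cases h : z ∈ circleMap 0 1 '' Icc a b
    · obtain ⟨t, ⟨hat, htb⟩, rfl⟩ := h
      refine Or.inl ⟨t, ⟨hat.lt_of_ne ?_, htb.lt_of_ne ?_⟩, rfl⟩ <;> rintro rfl <;> simp at hzab
    · exact Or.inr (S1_diff_image_Icc hab.le hb ▸ ⟨hz, h⟩)
  · rintro (h | h)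
    · rw [circleArc_eq_S1_diff hab hb] at h
      exact ⟨h.1, fun h' ↦ h.2 (hends' h')⟩
    · rw [← S1_diff_image_Icc hab.le hb] at h
      exact ⟨h.1, fun h' ↦ h.2 (hends h')⟩

lemma connectedComponentIn_S1_diff_pair {y : ℂ} (hab : a < b) (hb : b < a + 2 * π)
    (hy : y ∈ circleArc a b) :
    connectedComponentIn (S1 \ {circleMap 0 1 a, circleMap 0 1 b}) y = circleArc a b := by
  have hsub : circleArc a b ⊆ S1 \ {circleMap 0 1 a, circleMap 0 1 b} := by
    rw [S1_diff_pair_eq_union hab hb]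
    exact subset_union_left
  refine Subset.antisymm ?_ (isPreconnected_circleArc.subset_connectedComponentIn hy hsub)
  set C := connectedComponentIn (S1 \ {circleMap 0 1 a, circleMap 0 1 b}) y
  have hCS1 : C ⊆ S1 := (connectedComponentIn_subset _ _).trans sdiff_subset
  have hcover : C ⊆ (circleMap 0 1 '' Icc b (a + 2 * π))ᶜ ∪ (circleMap 0 1 '' Icc a b)ᶜ := by
    intro z hz
    rcases S1_diff_pair_eq_union hab hb ▸ connectedComponentIn_subset _ _ hz with h | h
    · rw [circleArc_eq_S1_diff hab hb] at h
      exact Or.inl h.2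
    · rw [← S1_diff_image_Icc hab.le hb] at h
      exact Or.inr h.2
  have hdisj : C ∩ ((circleMap 0 1 '' Icc b (a + 2 * π))ᶜ ∩ (circleMap 0 1 '' Icc a b)ᶜ) = ∅ := by
    refine eq_empty_of_forall_notMem fun z ⟨hz, hzu, hzv⟩ ↦ hzu ?_
    have h : z ∈ S1 \ circleMap 0 1 '' Icc a b := ⟨hCS1 hz, hzv⟩
    rw [S1_diff_image_Icc hab.le hb] at h
    exact image_mono Ioo_subset_Icc_self h
  rcases isPreconnected_iff_subset_of_disjoint.mp isPreconnected_connectedComponentIn _ _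
    (isClosed_image_circleMap_Icc _ _).isOpen_compl (isClosed_image_circleMap_Icc _ _).isOpen_compl
    hcover hdisj with hC | hC
  · rw [circleArc_eq_S1_diff hab hb]
    exact fun z hz ↦ ⟨hCS1 hz, hC hz⟩
  · exact absurd (image_mono Ioo_subset_Icc_self hy) (hC (mem_connectedComponentIn (hsub hy)))

lemma connectedComponentIn_S1_diff_pair' {y : ℂ} (hab : a < b) (hb : b < a + 2 * π)
    (hy : y ∈ circleArc b (a + 2 * π)) :
    connectedComponentIn (S1 \ {circleMap 0 1 a, circleMap 0 1 b}) y = circleArc b (a + 2 * π) := by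
  rw [← periodic_circleMap 0 1 a, pair_comm]
  exact connectedComponentIn_S1_diff_pair hb (by linarith) hy

end circleArc

lemma exists_circleArc_of_mem_S1_diff_pair {p q r : ℂ} (hp : p ∈ S1) (hq : q ∈ S1) (hr : r ∈ S1)
    (hqr : q ≠ r) (hpqr : p ∉ ({q, r} : Set ℂ)) :
    ∃ a b, a < b ∧ b < a + 2 * π ∧ {q, r} = ({circleMap 0 1 a, circleMap 0 1 b} : Set ℂ) ∧
      p ∈ circleArc a b := by
  -- With `p` at angle `θ`, put `q, r` at angles in `(θ, θ + 2π)`; the arc through `p` runs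
  -- from the larger of them, shifted by `-2π`, to the smaller.
  obtain ⟨θ, -, rfl⟩ := image_circleMap_Ico 0 ▸ hp
  obtain ⟨α, ⟨hθα, hα⟩, rfl⟩ := image_circleMap_Ico θ ▸ hq
  obtain ⟨β, ⟨hθβ, hβ⟩, rfl⟩ := image_circleMap_Ico θ ▸ hr
  simp only [mem_insert_iff, mem_singleton_iff, not_or] at hpqr
  replace hθα := hθα.lt_of_ne fun h ↦ hpqr.1 (h ▸ rfl)
  replace hθβ := hθβ.lt_of_ne fun h ↦ hpqr.2 (h ▸ rfl)
  rcases (show α ≠ β by rintro rfl; exact hqr rfl).lt_or_gt with hαβ | hβα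
  · refine ⟨β - 2 * π, α, by linarith, by linarith, ?_, θ, ⟨by linarith, hθα⟩, rfl⟩
    rw [pair_comm, ← periodic_circleMap 0 1 (β - 2 * π), sub_add_cancel]
  · refine ⟨α - 2 * π, β, by linarith, by linarith, ?_, θ, ⟨by linarith, hθβ⟩, rfl⟩
    rw [← periodic_circleMap 0 1 (α - 2 * π), sub_add_cancel]

lemma arg_circleMap {s : ℝ} (hs : s ∈ Ioc (-π) π) : arg (circleMap 0 1 s) = s := by
  rw [circleMap_zero, ofReal_one, one_mul, arg_exp_mul_I, toIocMod_eq_self]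
  simpa [show -π + 2 * π = π by ring] using hs

lemma exists_continuousOn_leftInvOn_circleMap (θ : ℝ) {ε : ℝ} (hε : ε ≤ π) :
    ∃ L : ℂ → ℝ, ContinuousOn L (circleArc (θ - ε) (θ + ε)) ∧
      LeftInvOn L (circleMap 0 1) (Ioo (θ - ε) (θ + ε)) := by
  have hdiv : ∀ t, circleMap 0 1 t / circleMap 0 1 θ = circleMap 0 1 (t - θ) := fun t ↦ by
    rw [circleMap_zero_div, div_one]
  have harg : ∀ t ∈ Ioo (θ - ε) (θ + ε), arg (circleMap 0 1 (t - θ)) = t - θ := fun t ht ↦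
    arg_circleMap ⟨by linarith [ht.1], by linarith [ht.2]⟩
  refine ⟨fun z ↦ θ + arg (z / circleMap 0 1 θ), ?_, fun t ht ↦ ?_⟩
  · rintro _ ⟨t, ht, rfl⟩
    have hslit : circleMap 0 1 t / circleMap 0 1 θ ∈ slitPlane := by
      rw [mem_slitPlane_iff_arg, hdiv, harg t ht]
      exact ⟨by linarith [ht.1, ht.2], circleMap_ne_center one_ne_zero⟩
    exact (continuousAt_const.add ((continuousAt_arg hslit).comp (f := (· / circleMap 0 1 θ))
      (continuousAt_id.div_const _))).continuousWithinAt
  · simp only [hdiv, harg t ht]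
    ring

lemma exists_eq_circleArc_of_subset {U : Set ℂ} {θ ε : ℝ} (hε₀ : 0 < ε) (hε : ε ≤ π)
    (hU : OpenInS1 U) (hUc : IsPreconnected U) (hUε : U ⊆ circleArc (θ - ε) (θ + ε))
    (hθ : circleMap 0 1 θ ∈ U) :
    ∃ a b, θ - ε ≤ a ∧ a < θ ∧ θ < b ∧ b ≤ θ + ε ∧ U = circleArc a b := by
  obtain ⟨L, hLc, hLe⟩ := exists_continuousOn_leftInvOn_circleMap θ hε
  obtain ⟨-, O, hO, rfl⟩ := hU
  set T := Ioo (θ - ε) (θ + ε) ∩ circleMap 0 1 ⁻¹' O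
  have hTU : circleMap 0 1 '' T = O ∩ S1 := by
    refine Subset.antisymm (fun _ ⟨t, ht, he⟩ ↦ he ▸ ⟨ht.2, circleMap_mem_S1 t⟩) fun z hz ↦ ?_
    obtain ⟨t, ht, rfl⟩ := hUε hz
    exact ⟨t, ⟨ht, hz.1⟩, rfl⟩
  have hLU : L '' (O ∩ S1) = T := by
    refine Subset.antisymm (fun _ ⟨z, hz, hLz⟩ ↦ ?_) fun t ht ↦
      ⟨_, hTU ▸ mem_image_of_mem _ ht, hLe ht.1⟩
    obtain ⟨t, ht, rfl⟩ := hUε hz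
    rw [← hLz, hLe ht]
    exact ⟨ht, hz.1⟩
  have hθT : θ ∈ T := ⟨⟨by linarith, by linarith⟩, hθ.1⟩
  have hTc : IsPreconnected T := hLU ▸ hUc.image L (hLc.mono hUε)
  have hT : T = Ioo (sInf T) (sSup T) :=
    (isOpen_Ioo.inter (hO.preimage (continuous_circleMap 0 1))).eq_Ioo_csInf_csSup hTc
      ⟨θ, hθT⟩ ⟨θ - ε, fun t ht ↦ ht.1.1.le⟩ ⟨θ + ε, fun t ht ↦ ht.1.2.le⟩
  refine ⟨sInf T, sSup T, le_csInf ⟨θ, hθT⟩ fun t ht ↦ ht.1.1.le, (hT ▸ hθT).1, (hT ▸ hθT).2,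
    csSup_le ⟨θ, hθT⟩ fun t ht ↦ ht.1.2.le, ?_⟩
  rw [circleArc, ← hT, hTU]

lemma exists_image_circleMap_Icc_subset {W : Set ℂ} {θ : ℝ} (hW : W ∈ 𝓝[S1] (circleMap 0 1 θ)) :
    ∃ ε, 0 < ε ∧ ε < π ∧ circleMap 0 1 '' Icc (θ - ε) (θ + ε) ⊆ W := by
  have hθ : circleMap 0 1 ⁻¹' W ∈ 𝓝 θ := tendsto_nhdsWithin_iff.mpr
    ⟨(continuous_circleMap 0 1).tendsto θ, Eventually.of_forall circleMap_mem_S1⟩ hW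
  obtain ⟨δ, hδ, hδW⟩ := Metric.mem_nhds_iff.mp hθ
  refine ⟨min (δ / 2) (π / 2), by positivity, by linarith [min_le_right (δ / 2) (π / 2), pi_pos],
    image_subset_iff.mpr ?_⟩
  rw [← Real.closedBall_eq_Icc]
  exact (closedBall_subset_ball (by linarith [min_le_left (δ / 2) (π / 2)])).trans hδW

/-- Some translate of the geodesic with endpoints `q, r` separates `p` from `S¹ ∖ V`. -/
def TranslateSeparates (Γ : Subgroup SU11) (q r p : ℂ) (V : Set ℂ) : Prop :=
  ∃ γ ∈ Γ, p ≠ SU11.toFun γ q ∧ p ≠ SU11.toFun γ r ∧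
    connectedComponentIn (S1 \ {SU11.toFun γ q, SU11.toFun γ r}) p ⊆ V

section TranslateSeparates

variable {Γ : Subgroup SU11} {q r p : ℂ} {V : Set ℂ}

lemma CanConcentrate.translateSeparates {x : ℂ} (hq : q ∈ S1) (hr : r ∈ S1) (hp : p ∈ S1)
    (h : CanConcentrate Γ (connectedComponentIn (S1 \ {q, r}) x) p) (hV : NbhdInS1 V p) :
    TranslateSeparates Γ q r p V := by
  obtain ⟨V₀, hV₀, hpV₀, hV₀V⟩ := hV.exists_openInS1_subset hp
  obtain ⟨γ, hγ, ⟨y, hy, rfl⟩, hγV₀⟩ := h V₀ hV₀ hpV₀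
  have hyqr := connectedComponentIn_subset _ _ hy
  rw [connectedComponentIn_eq hy, γ.image_connectedComponentIn_S1_diff_pair hq hr hyqr] at hγV₀
  have hγy : SU11.toFun γ y ∉ ({SU11.toFun γ q, SU11.toFun γ r} : Set ℂ) :=
    (γ.image_S1_diff_pair hq hr ▸ mem_image_of_mem _ hyqr).2
  simp only [mem_insert_iff, mem_singleton_iff, not_or] at hγy
  exact ⟨γ, hγ, hγy.1, hγy.2, hγV₀.trans hV₀V⟩

lemma TranslateSeparates.exists_canConcentrate (hq : q ∈ S1) (hr : r ∈ S1) (hp : p ∈ S1)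
    (h : TranslateSeparates Γ q r p V) :
    ∃ γ ∈ Γ, ∃ y ∈ S1 \ {q, r}, p ∈ SU11.toFun γ '' connectedComponentIn (S1 \ {q, r}) y ∧
      SU11.toFun γ '' connectedComponentIn (S1 \ {q, r}) y ⊆ V := by
  obtain ⟨γ, hγ, hpq, hpr, hγV⟩ := h
  have hγy : SU11.toFun γ (SU11.toFun γ⁻¹ p) = p := by simpa using γ⁻¹.leftInvOn_toFun hp
  have hy : SU11.toFun γ⁻¹ p ∈ S1 \ {q, r} := by
    refine ⟨γ⁻¹.mapsTo_toFun_S1 hp, ?_⟩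
    rintro (h | h)
    · exact hpq (by rw [← h, hγy])
    · exact hpr (by rw [← h, hγy])
  refine ⟨γ, hγ, _, hy, ?_⟩
  rw [γ.image_connectedComponentIn_S1_diff_pair hq hr hy, hγy]
  exact ⟨mem_connectedComponentIn ⟨hp, by simp [hpq, hpr]⟩, hγV⟩

end TranslateSeparates

section ArcSeparation

def IsArcSeparationPt (Γ : Subgroup SU11) (p : ℂ) : Prop :=
  ∃ W : Set ℂ, NbhdInS1 W p ∧
    ∀ q r : ℂ, q ∈ W → r ∈ W → q ≠ p → r ≠ p → q ≠ r →
      connectedComponentIn (S1 \ {q, r}) p ⊆ W → ∀ V : Set ℂ, NbhdInS1 V p →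
        TranslateSeparates Γ q r p V

variable {Γ : Subgroup SU11} {p : ℂ}

lemma GeodSepPt.isArcSeparationPt (hp : p ∈ S1) (h : GeodSepPt Γ p) : IsArcSeparationPt Γ p := by
  obtain ⟨W, hW, hWU⟩ := h
  refine ⟨W, hW, fun q r hqW hrW hqp hrp hqr hpW V hV ↦ ?_⟩
  have hq := hW.1 hqW
  have hr := hW.1 hrW
  have hpqr : p ∈ S1 \ {q, r} := ⟨hp, by simp [hqp.symm, hrp.symm]⟩
  obtain ⟨a, b, hab, hb, hqr_eq, hpab⟩ := exists_circleArc_of_mem_S1_diff_pair hp hq hr hqr hpqr.2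
  have hC : connectedComponentIn (S1 \ {q, r}) p = circleArc a b :=
    hqr_eq ▸ connectedComponentIn_S1_diff_pair hab hb hpab
  rcases hWU _ (hC ▸ openInS1_circleArc hab hb) isPreconnected_connectedComponentIn
    (mem_connectedComponentIn hpqr) hpW with hconc | hconc
  · exact hconc.translateSeparates hq hr hp hV
  · have hmid : circleMap 0 1 ((b + (a + 2 * π)) / 2) ∈ circleArc b (a + 2 * π) :=
      mem_image_of_mem _ ⟨by linarith, by linarith⟩
    rw [hC, S1_diff_closure_circleArc hab hb, ← connectedComponentIn_S1_diff_pair' hab hb hmid,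
      ← hqr_eq] at hconc
    exact hconc.translateSeparates hq hr hp hV

lemma IsArcSeparationPt.geodSepPt (hp : p ∈ S1) (h : IsArcSeparationPt Γ p) : GeodSepPt Γ p := by
  obtain ⟨W, hW, hsep⟩ := h
  obtain ⟨θ, -, rfl⟩ := image_circleMap_Ico 0 ▸ hp
  obtain ⟨ε, hε₀, hε, hεW⟩ := exists_image_circleMap_Icc_subset hW.2
  refine ⟨circleArc (θ - ε) (θ + ε), (openInS1_circleArc (by linarith) (by linarith)).nbhdInS1
    ⟨θ, ⟨by linarith, by linarith⟩, rfl⟩, fun U hU hUc hpU hUε ↦ ?_⟩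
  obtain ⟨a, b, ha, haθ, hθb, hb, rfl⟩ := exists_eq_circleArc_of_subset hε₀ hε.le hU hUc hUε hpU
  have hab : a < b := haθ.trans hθb
  have hba : b < a + 2 * π := by linarith
  have hsepab := hsep _ _ (hεW ⟨a, ⟨ha, by linarith⟩, rfl⟩) (hεW ⟨b, ⟨by linarith, hb⟩, rfl⟩)
    (circleMap_ne_circleMap haθ (by linarith)) (circleMap_ne_circleMap hθb (by linarith)).symm
    (circleMap_ne_circleMap hab hba) (connectedComponentIn_S1_diff_pair hab hba hpU ▸
      hUε.trans ((image_mono Ioo_subset_Icc_self).trans hεW))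
  -- If `U` cannot be concentrated, some `V₀` defeats it; squeezing the separating arc into
  -- `V ∩ V₀` then forces the translated component to be the complementary arc.
  refine or_iff_not_imp_left.mpr fun hU' ↦ ?_
  obtain ⟨V₀, hV₀, hpV₀, hV₀U⟩ : ∃ V₀, OpenInS1 V₀ ∧ circleMap 0 1 θ ∈ V₀ ∧ ∀ γ ∈ Γ,
      circleMap 0 1 θ ∈ SU11.toFun γ '' circleArc a b → ¬SU11.toFun γ '' circleArc a b ⊆ V₀ := by
    simpa [CanConcentrate] using hU'
  intro V hV hpV
  obtain ⟨γ, hγ, y, hy, hpγ, hγV⟩ := (hsepab _ ((hV.inter hV₀).nbhdInS1 ⟨hpV, hpV₀⟩))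
    |>.exists_canConcentrate (circleMap_mem_S1 a) (circleMap_mem_S1 b) hp
  rcases S1_diff_pair_eq_union hab hba ▸ hy with hy | hy
  · rw [connectedComponentIn_S1_diff_pair hab hba hy] at hpγ hγV
    exact absurd (hγV.trans inter_subset_right) (hV₀U γ hγ hpγ)
  · rw [connectedComponentIn_S1_diff_pair' hab hba hy] at hpγ hγV
    rw [S1_diff_closure_circleArc hab hba]
    exact ⟨γ, hγ, hpγ, hγV.trans inter_subset_left⟩

end ArcSeparation

theorem geodSepPt_iff_arc_separation_general (Γ : Subgroup SU11)
    (p : ℂ) (hp : p ∈ S1) :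
    GeodSepPt Γ p ↔
      ∃ W : Set ℂ, NbhdInS1 W p ∧
        ∀ q r : ℂ, q ∈ W → r ∈ W → q ≠ p → r ≠ p → q ≠ r →
          connectedComponentIn (S1 \ {q, r}) p ⊆ W →
          ∀ V : Set ℂ, NbhdInS1 V p →
            ∃ γ ∈ Γ, p ≠ SU11.toFun γ q ∧ p ≠ SU11.toFun γ r ∧
              connectedComponentIn (S1 \ {SU11.toFun γ q, SU11.toFun γ r}) p ⊆ V :=
  ⟨GeodSepPt.isArcSeparationPt hp, IsArcSeparationPt.geodSepPt hp⟩

/-- A point `p ∈ S¹` is a geodesic separation point of a Fuchsian group `Γ` if and only if: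
there is a neighborhood `W` of `p` in `S¹` such that whenever `q, r ∈ W ∖ {p}` are distinct
points for which the open arc of `S¹` with endpoints `q` and `r` containing `p` is contained
in `W`, then for every neighborhood `V` of `p` there is `γ ∈ Γ` such that the open arc with
endpoints `γ(q)` and `γ(r)` containing `p` is contained in `V`. -/
theorem geodSepPt_iff_arc_separation (Γ : Subgroup SU11) (hΓ : IsFuchsian Γ)
    (p : ℂ) (hp : p ∈ S1) :
    GeodSepPt Γ p ↔
      ∃ W : Set ℂ, NbhdInS1 W p ∧
        ∀ q r : ℂ, q ∈ W → r ∈ W → q ≠ p → r ≠ p → q ≠ r →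
          connectedComponentIn (S1 \ {q, r}) p ⊆ W →
          ∀ V : Set ℂ, NbhdInS1 V p →
            ∃ γ ∈ Γ, p ≠ SU11.toFun γ q ∧ p ≠ SU11.toFun γ r ∧
              connectedComponentIn (S1 \ {SU11.toFun γ q, SU11.toFun γ r}) p ⊆ V :=
  geodSepPt_iff_arc_separation_general Γ p hp
end
end
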